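/- arXiv:math/0606501 — 3 statements merged into one kernel-verified Lean document; each statement's English description precedes it below -/
import Mathlib

section
/- There is a bijection between the set D_{f,k} of f-diagrams with exactly k arcs in each row and the product S_{f-2k} × J_{f,k} × J_{f,k}, where S_{f-2k} is the symmetric group on f-2k letters and J_{f,k} is the set of (f,k)-junctions. -/
/-- An `f`-diagram: a perfect matching on the `2f` vertices
`Fin f ⊕ Fin f` (top row `inl`, bottom row `inr`), modeled as a
fixed-point-free involution. -/
def IsBrauerDiagram {f : ℕ} (σ : Equiv.Perm (Fin f ⊕ Fin f)) : Prop :=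
  (∀ v, σ v ≠ v) ∧ (∀ v, σ (σ v) = v)

/-- A diagram lies in `D_{f,k}` if it has exactly `k` arcs in the top row,
i.e. `2k` top-row vertices are matched to top-row vertices. -/
def HasTopArcs {f : ℕ} (k : ℕ) (σ : Equiv.Perm (Fin f ⊕ Fin f)) : Prop :=
  Nat.card {i : Fin f // (σ (Sum.inl i)).isLeft} = 2 * k

/-- An `(f,k)`-junction: `k` pairwise disjoint 2-element subsets of `Fin f`. -/
def IsJunction {f : ℕ} (k : ℕ) (M : Finset (Finset (Fin f))) : Prop :=
  M.card = k ∧ (∀ e ∈ M, e.card = 2) ∧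
    ∀ e ∈ M, ∀ e' ∈ M, e ≠ e' → Disjoint e e'

/-!
A Brauer diagram is determined by three pieces of data: the involution of the top row sending
each vertex to its arc partner (and fixing the vertices on vertical edges), the analogous
involution of the bottom row, and the bijection between their fixed-point sets given by the
vertical edges. A `k`-junction is the same thing as an involution moving `2k` points, and then
both fixed-point sets have `f - 2k` elements, so after enumerating them the bijection becomes a
permutation of `Fin (f - 2k)`.
-/

open Equiv Function Finset

section Matching

variable {α : Type*} [DecidableEq α]

def IsMatching (M : Finset (Finset α)) : Prop :=
  (∀ e ∈ M, #e = 2) ∧ ∀ e ∈ M, ∀ e' ∈ M, e ≠ e' → Disjoint e e'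

open scoped Classical in
noncomputable def matchingPartner (M : Finset (Finset α)) (a : α) : α :=
  if h : ∃ b, {a, b} ∈ M then h.choose else a

theorem matchingPartner_eq_self {M : Finset (Finset α)} {a : α} (h : ¬∃ b, {a, b} ∈ M) :
    matchingPartner M a = a := by
  classical
  rw [matchingPartner, dif_neg h]

namespace IsMatching

variable {M : Finset (Finset α)}

theorem ne_of_pair_mem (hM : IsMatching M) {a b : α} (h : {a, b} ∈ M) : a ≠ b := by
  rintro rfl
  simpa using hM.1 _ h

theorem eq_of_pair_mem (hM : IsMatching M) {a b c : α} (hb : {a, b} ∈ M) (hc : {a, c} ∈ M) :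
    b = c := by
  have hbc : ({a, b} : Finset α) = {a, c} := by
    by_contra hne
    exact disjoint_left.mp (hM.2 _ hb _ hc hne) (mem_insert_self a _) (mem_insert_self a _)
  have hb' : b ∈ ({a, c} : Finset α) := hbc ▸ mem_insert_of_mem (mem_singleton_self b)
  rcases mem_insert.mp hb' with rfl | hb'
  · exact absurd rfl (hM.ne_of_pair_mem hb)
  · exact mem_singleton.mp hb'

theorem matchingPartner_eq (hM : IsMatching M) {a b : α} (h : {a, b} ∈ M) :
    matchingPartner M a = b := by
  have hex : ∃ b, {a, b} ∈ M := ⟨b, h⟩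
  classical
  rw [matchingPartner, dif_pos hex]
  exact hM.eq_of_pair_mem hex.choose_spec h

theorem matchingPartner_involutive (hM : IsMatching M) : Involutive (matchingPartner M) := by
  intro a
  by_cases h : ∃ b, {a, b} ∈ M
  · obtain ⟨b, hab⟩ := h
    rw [hM.matchingPartner_eq hab, hM.matchingPartner_eq (pair_comm a b ▸ hab)]
  · rw [matchingPartner_eq_self h, matchingPartner_eq_self h]

theorem pair_matchingPartner_mem (hM : IsMatching M) {a : α} (ha : matchingPartner M a ≠ a) :
    {a, matchingPartner M a} ∈ M := by
  by_contra hnot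
  refine ha (matchingPartner_eq_self ?_)
  rintro ⟨b, hab⟩
  exact hnot (hM.matchingPartner_eq hab ▸ hab)

theorem card_biUnion (hM : IsMatching M) : #(M.biUnion id) = 2 * #M :=
  calc #(M.biUnion id) = ∑ e ∈ M, #e := Finset.card_biUnion hM.2
    _ = 2 * #M := by rw [sum_congr rfl hM.1, sum_const, smul_eq_mul, mul_comm]

end IsMatching

variable [Fintype α]

def matchingOf (τ : Perm α) : Finset (Finset α) := τ.support.image fun a => {a, τ a}

variable {τ : Perm α}

theorem eq_pair_of_mem_matchingOf (hτ : Involutive τ) {e : Finset α} (he : e ∈ matchingOf τ)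
    {a : α} (ha : a ∈ e) : τ a ≠ a ∧ e = {a, τ a} := by
  obtain ⟨b, hb, rfl⟩ := mem_image.mp he
  rw [Perm.mem_support] at hb
  rcases mem_insert.mp ha with rfl | ha
  · exact ⟨hb, rfl⟩
  · obtain rfl := mem_singleton.mp ha
    exact ⟨by rw [hτ b]; exact hb.symm, by rw [hτ b, pair_comm]⟩

theorem isMatching_matchingOf (hτ : Involutive τ) : IsMatching (matchingOf τ) := by
  refine ⟨fun e he => ?_, fun e he e' he' hne => disjoint_left.mpr fun a ha ha' => ?_⟩
  · obtain ⟨a, ha, rfl⟩ := mem_image.mp he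
    exact card_pair (Perm.mem_support.mp ha).symm
  · exact hne ((eq_pair_of_mem_matchingOf hτ he ha).2.trans
      (eq_pair_of_mem_matchingOf hτ he' ha').2.symm)

theorem biUnion_matchingOf (hτ : Involutive τ) : (matchingOf τ).biUnion id = τ.support := by
  ext a
  simp only [mem_biUnion, id, Perm.mem_support]
  constructor
  · rintro ⟨e, he, ha⟩
    exact (eq_pair_of_mem_matchingOf hτ he ha).1
  · intro ha
    exact ⟨{a, τ a}, mem_image_of_mem _ (Perm.mem_support.mpr ha), mem_insert_self a _⟩

theorem two_mul_card_matchingOf (hτ : Involutive τ) : 2 * #(matchingOf τ) = #τ.support := by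
  rw [← (isMatching_matchingOf hτ).card_biUnion, biUnion_matchingOf hτ]

theorem matchingPartner_matchingOf (hτ : Involutive τ) :
    matchingPartner (matchingOf τ) = τ := by
  funext a
  by_cases ha : τ a = a
  · rw [ha, matchingPartner_eq_self]
    rintro ⟨b, hab⟩
    exact (eq_pair_of_mem_matchingOf hτ hab (mem_insert_self a _)).1 ha
  · exact (isMatching_matchingOf hτ).matchingPartner_eq
      (mem_image_of_mem _ (Perm.mem_support.mpr ha))

theorem IsMatching.matchingOf_matchingPartner {M : Finset (Finset α)} (hM : IsMatching M) :
    matchingOf hM.matchingPartner_involutive.toPerm = M := by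
  ext e
  simp only [matchingOf, mem_image, Perm.mem_support, Involutive.coe_toPerm]
  constructor
  · rintro ⟨a, ha, rfl⟩
    exact hM.pair_matchingPartner_mem ha
  · intro he
    obtain ⟨a, b, hab, rfl⟩ := card_eq_two.mp (hM.1 e he)
    have hpa := hM.matchingPartner_eq he
    exact ⟨a, hpa ▸ hab.symm, hpa ▸ rfl⟩

abbrev Involutions (α : Type*) [Fintype α] [DecidableEq α] (n : ℕ) :=
  {τ : Perm α // Involutive τ ∧ #τ.support = n}

noncomputable def matchingEquivInvolutions (k : ℕ) :
    {M : Finset (Finset α) // #M = k ∧ IsMatching M} ≃ Involutions α (2 * k) where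
  toFun M := ⟨M.2.2.matchingPartner_involutive.toPerm, M.2.2.matchingPartner_involutive, by
    rw [← two_mul_card_matchingOf M.2.2.matchingPartner_involutive,
      M.2.2.matchingOf_matchingPartner, M.2.1]⟩
  invFun τ := ⟨matchingOf τ, by have := two_mul_card_matchingOf τ.2.1; omega,
    isMatching_matchingOf τ.2.1⟩
  left_inv M := Subtype.ext M.2.2.matchingOf_matchingPartner
  right_inv τ := Subtype.ext (Perm.ext (congrFun (matchingPartner_matchingOf τ.2.1)))

theorem card_fixed_eq_card_sub_card_support (τ : Perm α) :
    Fintype.card {a // τ a = a} = Fintype.card α - #τ.support := by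
  rw [Fintype.card_subtype, ← card_compl]
  congr 1
  ext a
  simp [Perm.mem_support]

end Matching

namespace Brauer

variable {α β : Type*}

/-- The arc partner of the top vertex `a` under `σ`, or `a` itself if `a` lies on a vertical
edge. -/
def topPartner (σ : α ⊕ β → α ⊕ β) (a : α) : α := (σ (.inl a)).elim id fun _ => a

def bottomPartner (σ : α ⊕ β → α ⊕ β) (b : β) : β := (σ (.inr b)).elim (fun _ => b) id

variable {σ : α ⊕ β → α ⊕ β}

theorem apply_inl_of_topPartner_ne {a : α} (h : topPartner σ a ≠ a) :
    σ (.inl a) = .inl (topPartner σ a) := by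
  unfold topPartner at *
  rcases hσa : σ (.inl a) with a' | b
  · rfl
  · simp [hσa] at h

theorem apply_inr_of_bottomPartner_ne {b : β} (h : bottomPartner σ b ≠ b) :
    σ (.inr b) = .inr (bottomPartner σ b) := by
  unfold bottomPartner at *
  rcases hσb : σ (.inr b) with a | b'
  · simp [hσb] at h
  · rfl

theorem topPartner_eq_self_iff (hσ : ∀ v, σ v ≠ v) {a : α} :
    topPartner σ a = a ↔ (σ (.inl a)).isRight := by
  unfold topPartner
  rcases hσa : σ (.inl a) with a' | b
  · simp only [Sum.elim_inl, id, Sum.isRight_inl, Bool.false_eq_true, iff_false]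
    rintro rfl
    exact hσ _ hσa
  · simp

theorem bottomPartner_eq_self_iff (hσ : ∀ v, σ v ≠ v) {b : β} :
    bottomPartner σ b = b ↔ (σ (.inr b)).isLeft := by
  unfold bottomPartner
  rcases hσb : σ (.inr b) with a | b'
  · simp
  · simp only [Sum.elim_inr, id, Sum.isLeft_inr, Bool.false_eq_true, iff_false]
    rintro rfl
    exact hσ _ hσb

theorem topPartner_involutive (hσ : Involutive σ) : Involutive (topPartner σ) := by
  intro a
  by_cases h : topPartner σ a = a
  · rw [h, h]
  · have h' := apply_inl_of_topPartner_ne h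
    rw [topPartner, ← h', hσ]
    rfl

theorem bottomPartner_involutive (hσ : Involutive σ) : Involutive (bottomPartner σ) := by
  intro b
  by_cases h : bottomPartner σ b = b
  · rw [h, h]
  · have h' := apply_inr_of_bottomPartner_ne h
    rw [bottomPartner, ← h', hσ]
    rfl

def verticalEquiv (hσ : ∀ v, σ v ≠ v) (hinv : Involutive σ) :
    {a // topPartner σ a = a} ≃ {b // bottomPartner σ b = b} where
  toFun a := ⟨(σ (.inl a)).getRight ((topPartner_eq_self_iff hσ).mp a.2), by
    rw [bottomPartner_eq_self_iff hσ, Sum.inr_getRight, hinv]; rfl⟩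
  invFun b := ⟨(σ (.inr b)).getLeft ((bottomPartner_eq_self_iff hσ).mp b.2), by
    rw [topPartner_eq_self_iff hσ, Sum.inl_getLeft, hinv]; rfl⟩
  left_inv a := Subtype.ext <| by rw [Sum.getLeft_eq_iff, Sum.inr_getRight, hinv]
  right_inv b := Subtype.ext <| by rw [Sum.getRight_eq_iff, Sum.inl_getLeft, hinv]

theorem card_support_eq_nat_card_isLeft [Fintype α] [DecidableEq α] (hσ : ∀ v, σ v ≠ v)
    {τ : Perm α} (hτ : ⇑τ = topPartner σ) :
    #τ.support = Nat.card {a // (σ (.inl a)).isLeft} := by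
  rw [Nat.card_eq_fintype_card, Fintype.card_subtype]
  congr 1
  ext a
  rw [Perm.mem_support, mem_filter, hτ, Ne, topPartner_eq_self_iff hσ, Sum.not_isRight]
  simp

variable [DecidableEq α] [DecidableEq β]

def glue (τ : α → α) (τ' : β → β) (e : {a // τ a = a} ≃ {b // τ' b = b}) :
    α ⊕ β → α ⊕ β
  | .inl a => if h : τ a = a then .inr (e ⟨a, h⟩) else .inl (τ a)
  | .inr b => if h : τ' b = b then .inl (e.symm ⟨b, h⟩) else .inr (τ' b)

variable {τ : α → α} {τ' : β → β} {e : {a // τ a = a} ≃ {b // τ' b = b}}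

theorem glue_inl_of_fixed (a : {a // τ a = a}) : glue τ τ' e (.inl a) = .inr (e a) := by
  rw [glue, dif_pos a.2]

theorem glue_inl_of_ne {a : α} (h : τ a ≠ a) : glue τ τ' e (.inl a) = .inl (τ a) := by
  rw [glue, dif_neg h]

theorem glue_inr_of_fixed (b : {b // τ' b = b}) : glue τ τ' e (.inr b) = .inl (e.symm b) := by
  rw [glue, dif_pos b.2]

theorem glue_inr_of_ne {b : β} (h : τ' b ≠ b) : glue τ τ' e (.inr b) = .inr (τ' b) := by
  rw [glue, dif_neg h]

theorem glue_ne_self : ∀ v, glue τ τ' e v ≠ v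
  | .inl a => by
    by_cases h : τ a = a
    · simp [glue_inl_of_fixed ⟨a, h⟩]
    · simpa [glue_inl_of_ne h] using h
  | .inr b => by
    by_cases h : τ' b = b
    · simp [glue_inr_of_fixed ⟨b, h⟩]
    · simpa [glue_inr_of_ne h] using h

theorem glue_involutive (hτ : Involutive τ) (hτ' : Involutive τ') : Involutive (glue τ τ' e)
  | .inl a => by
    by_cases h : τ a = a
    · rw [glue_inl_of_fixed ⟨a, h⟩, glue_inr_of_fixed, symm_apply_apply]
    · rw [glue_inl_of_ne h, glue_inl_of_ne (by rwa [hτ a, ne_comm]), hτ a]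
  | .inr b => by
    by_cases h : τ' b = b
    · rw [glue_inr_of_fixed ⟨b, h⟩, glue_inl_of_fixed, apply_symm_apply]
    · rw [glue_inr_of_ne h, glue_inr_of_ne (by rwa [hτ' b, ne_comm]), hτ' b]

theorem topPartner_glue : topPartner (glue τ τ' e) = τ := by
  funext a
  by_cases h : τ a = a
  · rw [topPartner, glue_inl_of_fixed ⟨a, h⟩, Sum.elim_inr, h]
  · rw [topPartner, glue_inl_of_ne h, Sum.elim_inl, id]

theorem bottomPartner_glue : bottomPartner (glue τ τ' e) = τ' := by
  funext b
  by_cases h : τ' b = b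
  · rw [bottomPartner, glue_inr_of_fixed ⟨b, h⟩, Sum.elim_inl, h]
  · rw [bottomPartner, glue_inr_of_ne h, Sum.elim_inr, id]

theorem glue_topPartner_bottomPartner (hσ : ∀ v, σ v ≠ v) (hinv : Involutive σ) :
    glue (topPartner σ) (bottomPartner σ) (verticalEquiv hσ hinv) = σ := by
  funext v
  rcases v with a | b
  · by_cases h : topPartner σ a = a
    · rw [glue_inl_of_fixed ⟨a, h⟩]
      exact Sum.inr_getRight _ _
    · rw [glue_inl_of_ne h, apply_inl_of_topPartner_ne h]
  · by_cases h : bottomPartner σ b = b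
    · rw [glue_inr_of_fixed ⟨b, h⟩]
      exact Sum.inl_getLeft _ _
    · rw [glue_inr_of_ne h, apply_inr_of_bottomPartner_ne h]

variable (f k : ℕ)

abbrev DiagramParts :=
  Σ p : Involutions (Fin f) (2 * k) × Involutions (Fin f) (2 * k),
    {i // p.1.1 i = i} ≃ {j // p.2.1 j = j}

def ofParts (p : DiagramParts f k) :
    {σ : Perm (Fin f ⊕ Fin f) // IsBrauerDiagram σ ∧ HasTopArcs k σ} :=
  ⟨(glue_involutive (e := p.2) p.1.1.2.1 p.1.2.2.1).toPerm,
    ⟨glue_ne_self, glue_involutive p.1.1.2.1 p.1.2.2.1⟩,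
    (card_support_eq_nat_card_isLeft glue_ne_self topPartner_glue.symm).symm.trans p.1.1.2.2⟩

theorem ofParts_injective : Injective (ofParts f k) := by
  rintro ⟨⟨⟨τ, _⟩, ⟨τ', _⟩⟩, e⟩ ⟨⟨⟨ρ, _⟩, ⟨ρ', _⟩⟩, e'⟩ h
  have hglue : glue τ τ' e = glue ρ ρ' e' := congrArg DFunLike.coe (congrArg Subtype.val h)
  obtain rfl : τ = ρ := DFunLike.coe_injective <|
    topPartner_glue.symm.trans ((congrArg topPartner hglue).trans topPartner_glue)
  obtain rfl : τ' = ρ' := DFunLike.coe_injective <|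
    bottomPartner_glue.symm.trans ((congrArg bottomPartner hglue).trans bottomPartner_glue)
  obtain rfl : e = e' := Equiv.ext fun a => Subtype.ext <| Sum.inr_injective <| by
    rw [← glue_inl_of_fixed, hglue, glue_inl_of_fixed]
  rfl

theorem ofParts_surjective : Surjective (ofParts f k) := by
  rintro ⟨σ, ⟨hσ, hinv⟩, htop⟩
  let τ := (topPartner_involutive hinv).toPerm
  let τ' := (bottomPartner_involutive hinv).toPerm
  have hτ : #τ.support = 2 * k := (card_support_eq_nat_card_isLeft hσ rfl).trans htop
  have hτ' : #τ'.support = 2 * k := by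
    have hfixed : Fintype.card {a // τ a = a} = Fintype.card {b // τ' b = b} :=
      Fintype.card_congr (verticalEquiv hσ hinv)
    have hle := card_le_univ τ.support
    have hle' := card_le_univ τ'.support
    rw [card_fixed_eq_card_sub_card_support τ, card_fixed_eq_card_sub_card_support τ'] at hfixed
    omega
  exact ⟨⟨(⟨τ, topPartner_involutive hinv, hτ⟩,
      ⟨τ', bottomPartner_involutive hinv, hτ'⟩), verticalEquiv hσ hinv⟩,
    Subtype.ext (DFunLike.coe_injective (glue_topPartner_bottomPartner hσ hinv))⟩

end Brauer

theorem diagrams_equiv_perm_junctions_general (f k : ℕ) :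
    Nonempty
      ({σ : Equiv.Perm (Fin f ⊕ Fin f) // IsBrauerDiagram σ ∧ HasTopArcs k σ} ≃
        Equiv.Perm (Fin (f - 2 * k)) ×
          {M : Finset (Finset (Fin f)) // IsJunction k M} ×
          {M : Finset (Finset (Fin f)) // IsJunction k M}) := by
  have card_fixed (τ : Involutions (Fin f) (2 * k)) :
      Fintype.card {i // τ.1 i = i} = f - 2 * k := by
    rw [card_fixed_eq_card_sub_card_support, τ.2.2, Fintype.card_fin]
  let fibreEquiv (p : Involutions (Fin f) (2 * k) × Involutions (Fin f) (2 * k)) :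
      ({i // p.1.1 i = i} ≃ {j // p.2.1 j = j}) ≃ Perm (Fin (f - 2 * k)) :=
    equivCongr (Fintype.equivFinOfCardEq (card_fixed p.1))
      (Fintype.equivFinOfCardEq (card_fixed p.2))
  let junctionEquiv :
      {M : Finset (Finset (Fin f)) // IsJunction k M} ≃ Involutions (Fin f) (2 * k) :=
    matchingEquivInvolutions k
  let partsEquiv := Equiv.ofBijective _ ⟨Brauer.ofParts_injective f k,
    Brauer.ofParts_surjective f k⟩
  exact ⟨partsEquiv.symm
    |>.trans (sigmaEquivProdOfEquiv fibreEquiv) |>.trans (prodComm _ _)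
    |>.trans (prodCongr (Equiv.refl _) (prodCongr junctionEquiv.symm junctionEquiv.symm))⟩

/-- There is a bijection
`D_{f,k} ≃ S_{f-2k} × J_{f,k} × J_{f,k}`. -/
theorem diagrams_equiv_perm_junctions (f k : ℕ) (h : 2 * k ≤ f) :
    Nonempty
      ({σ : Equiv.Perm (Fin f ⊕ Fin f) // IsBrauerDiagram σ ∧ HasTopArcs k σ} ≃
        Equiv.Perm (Fin (f - 2 * k)) ×
          {M : Finset (Finset (Fin f)) // IsJunction k M} ×
          {M : Finset (Finset (Fin f)) // IsJunction k M}) :=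
  diagrams_equiv_perm_junctions_general f k
end

section
/- Let A be a generalized matrix algebra over a field k with basis {e_{ij}}_{i,j ∈ I} and structure constants σ*_{jp} (so e_{ij}·e_{pq} = σ*_{jp} e_{iq}), and let Φ(A) = (σ*_{ij}) be the matrix of structure constants. Then the set of properly nilpotent elements of A is a two-sided ideal of dimension |I|² − rank(Φ(A))². -/
/-- The multiplication of a generalized matrix algebra with basis
`{e_{ij}}_{i,j ∈ I}` and structure constants matrix `Φ = (σ*_{ij})`:
identifying `∑ x_{ij} e_{ij}` with the matrix `x`, the rule
`e_{ij}·e_{pq} = σ*_{jp} e_{iq}` reads `x ⋆ y = x * Φ * y`. -/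
def gmaMul {k I : Type*} [Field k] [Fintype I] [DecidableEq I]
    (Φ : Matrix I I k) (x y : Matrix I I k) : Matrix I I k :=
  x * Φ * y

/-- Iterated powers `x, x⋆x, x⋆x⋆x, …` in the generalized matrix algebra. -/
def gmaPow {k I : Type*} [Field k] [Fintype I] [DecidableEq I]
    (Φ : Matrix I I k) (x : Matrix I I k) : ℕ → Matrix I I k
  | 0 => x
  | n + 1 => gmaMul Φ (gmaPow Φ x n) x

/-- `x` is properly nilpotent: `a ⋆ x` is nilpotent for every `a`. -/
def GmaProperlyNilpotent {k I : Type*} [Field k] [Fintype I] [DecidableEq I]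
    (Φ : Matrix I I k) (x : Matrix I I k) : Prop :=
  ∀ a : Matrix I I k, ∃ n : ℕ, gmaPow Φ (gmaMul Φ a x) n = 0

/-!
A properly nilpotent `x` satisfies `Φ x Φ = 0`: otherwise some `a` gives `a Φ x Φ` nonzero trace,
while `(a Φ x Φ)^(n+1) = (a Φ x)(Φ a Φ x)^n Φ` vanishes. Conversely `Φ x Φ = 0` makes
`(a Φ x)⋆(a Φ x)` vanish. Reading matrices as endomorphisms of `V = k^I`, the condition
`Φ x Φ = 0` says that `x` maps `range Φ` into `ker Φ`, i.e. that `x` lies in the kernel of the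
surjection `End V → Hom(range Φ, V ⧸ ker Φ)`, whose target has dimension `(rank Φ)²`.
-/

open LinearMap Module

section RangeQuotKer

variable {k V : Type*} [Field k] [AddCommGroup V] [Module k V]

def restrictRangeQuotKer (f : End k V) : End k V →ₗ[k] (range f →ₗ[k] V ⧸ ker f) :=
  lcomp k _ (range f).subtype ∘ₗ llcomp k V V _ (ker f).mkQ

@[simp]
lemma restrictRangeQuotKer_apply_apply (f x : End k V) (v : range f) :
    restrictRangeQuotKer f x v = (ker f).mkQ (x v) :=
  rfl

lemma restrictRangeQuotKer_eq_zero_iff (f x : End k V) :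
    restrictRangeQuotKer f x = 0 ↔ f * x * f = 0 := by
  simp [LinearMap.ext_iff]

lemma restrictRangeQuotKer_surjective (f : End k V) :
    Function.Surjective (restrictRangeQuotKer f) := by
  intro g
  obtain ⟨h, rfl⟩ := projective_lifting_property (ker f).mkQ g (ker f).mkQ_surjective
  obtain ⟨x, rfl⟩ := h.exists_extend
  exact ⟨x, rfl⟩

lemma finrank_ker_restrictRangeQuotKer [FiniteDimensional k V] (f : End k V) :
    finrank k (ker (restrictRangeQuotKer f)) = finrank k V ^ 2 - finrank k (range f) ^ 2 := by
  have hquot : finrank k (V ⧸ ker f) = finrank k (range f) := f.quotKerEquivRange.finrank_eq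
  have hsum := finrank_range_add_finrank_ker (restrictRangeQuotKer f)
  rw [range_eq_top.mpr (restrictRangeQuotKer_surjective f), finrank_top, finrank_linearMap,
    finrank_linearMap, hquot] at hsum
  rw [sq, sq]
  omega

end RangeQuotKer

section GeneralizedMatrixAlgebra

variable {k I : Type*} [Field k] [Fintype I] [DecidableEq I]

lemma gmaPow_eq_mul_pow (Φ x : Matrix I I k) (n : ℕ) : gmaPow Φ x n = x * (Φ * x) ^ n := by
  induction n with
  | zero => simp [gmaPow]
  | succ n ih => rw [gmaPow, ih, gmaMul, pow_succ, mul_assoc, mul_assoc]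

lemma mul_pow_succ_eq_gmaPow_mul (Φ x : Matrix I I k) (n : ℕ) :
    (x * Φ) ^ (n + 1) = gmaPow Φ x n * Φ := by
  rw [pow_succ, ← mul_assoc, mul_pow_mul, gmaPow_eq_mul_pow]

lemma gmaProperlyNilpotent_iff (Φ x : Matrix I I k) :
    GmaProperlyNilpotent Φ x ↔ Φ * x * Φ = 0 := by
  refine ⟨fun h => ?_, fun h a => ⟨1, ?_⟩⟩
  · rw [Matrix.ext_iff_trace_mul_left]
    intro a
    obtain ⟨n, hn⟩ := h a
    have hnil : IsNilpotent (a * (Φ * x * Φ)) :=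
      ⟨n + 1, by
        rw [show a * (Φ * x * Φ) = gmaMul Φ a x * Φ by simp only [gmaMul, mul_assoc],
          mul_pow_succ_eq_gmaPow_mul, hn, zero_mul]⟩
    simpa using (Matrix.isNilpotent_trace_of_isNilpotent hnil).eq_zero
  · rw [gmaPow_eq_mul_pow, pow_one, gmaMul]
    calc a * Φ * x * (Φ * (a * Φ * x)) = a * (Φ * x * Φ) * (a * Φ * x) := by
          simp only [mul_assoc]
      _ = 0 := by rw [h, mul_zero, zero_mul]

def gmaRadical (Φ : Matrix I I k) : Submodule k (Matrix I I k) :=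
  (ker (restrictRangeQuotKer (Matrix.toLinAlgEquiv' Φ))).comap
    (Matrix.toLinAlgEquiv' : Matrix I I k ≃ₐ[k] End k (I → k)).toLinearMap

lemma mem_gmaRadical_iff (Φ x : Matrix I I k) : x ∈ gmaRadical Φ ↔ Φ * x * Φ = 0 := by
  rw [gmaRadical, Submodule.mem_comap, mem_ker, AlgEquiv.toLinearMap_apply,
    restrictRangeQuotKer_eq_zero_iff, ← map_mul, ← map_mul,
    map_eq_zero_iff _ Matrix.toLinAlgEquiv'.injective]

lemma coe_gmaRadical (Φ : Matrix I I k) :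
    (gmaRadical Φ : Set (Matrix I I k)) = {x | GmaProperlyNilpotent Φ x} := by
  ext x
  rw [SetLike.mem_coe, mem_gmaRadical_iff, Set.mem_ofPred_eq, gmaProperlyNilpotent_iff]

lemma gmaMul_mem_gmaRadical_left (Φ a : Matrix I I k) {x : Matrix I I k}
    (hx : x ∈ gmaRadical Φ) : gmaMul Φ a x ∈ gmaRadical Φ := by
  rw [mem_gmaRadical_iff] at hx ⊢
  calc Φ * gmaMul Φ a x * Φ = Φ * a * (Φ * x * Φ) := by simp only [gmaMul, mul_assoc]
    _ = 0 := by rw [hx, mul_zero]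

lemma gmaMul_mem_gmaRadical_right (Φ a : Matrix I I k) {x : Matrix I I k}
    (hx : x ∈ gmaRadical Φ) : gmaMul Φ x a ∈ gmaRadical Φ := by
  rw [mem_gmaRadical_iff] at hx ⊢
  calc Φ * gmaMul Φ x a * Φ = Φ * x * Φ * (a * Φ) := by simp only [gmaMul, mul_assoc]
    _ = 0 := by rw [hx, zero_mul]

lemma finrank_gmaRadical (Φ : Matrix I I k) :
    finrank k (gmaRadical Φ) = Fintype.card I ^ 2 - Φ.rank ^ 2 := by
  set e : Matrix I I k ≃ₐ[k] End k (I → k) := Matrix.toLinAlgEquiv'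
  have hrank : finrank k (range (e Φ)) = Φ.rank := rfl
  rw [← finrank_fintype_fun_eq_card k, ← hrank, ← finrank_ker_restrictRangeQuotKer,
    ← e.toLinearEquiv.symm.finrank_map_eq]
  exact congrArg (fun S : Submodule k (Matrix I I k) => finrank k S)
    (Submodule.comap_equiv_eq_map_symm e.toLinearEquiv _)

end GeneralizedMatrixAlgebra

/-- In a generalized matrix algebra `A` with structure-constants matrix
`Φ(A)`, the set of properly nilpotent elements is a two-sided ideal of
dimension `|I|² − rank(Φ(A))²`. -/
theorem gma_radical_dim {k I : Type*} [Field k] [Fintype I] [DecidableEq I]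
    (Φ : Matrix I I k) :
    ∃ S : Submodule k (Matrix I I k),
      (S : Set (Matrix I I k)) = {x | GmaProperlyNilpotent Φ x} ∧
      (∀ a : Matrix I I k, ∀ x ∈ S, gmaMul Φ a x ∈ S ∧ gmaMul Φ x a ∈ S) ∧
      Module.finrank k S = Fintype.card I ^ 2 - Φ.rank ^ 2 := by
  exact ⟨gmaRadical Φ, coe_gmaRadical Φ,
    fun a _ hx => ⟨gmaMul_mem_gmaRadical_left Φ a hx, gmaMul_mem_gmaRadical_right Φ a hx⟩,
    finrank_gmaRadical Φ⟩
end

section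
/- The radical of a generalized matrix algebra satisfies Rad(A)³ = 0, i.e. its nilpotency degree is at most 3. -/
lemma gmaPow_eq {k I : Type*} [Field k] [Fintype I] [DecidableEq I]
    (Φ : Matrix I I k) (w : Matrix I I k) (n : ℕ) :
    gmaPow Φ w n = w * (Φ * w) ^ n := by
  induction n with
  | zero => simp [gmaPow]
  | succ n ih => simp [gmaPow, gmaMul, ih, pow_succ, mul_assoc]

lemma gma_aux_pow {M : Type*} [Monoid M] (a b : M) (n : ℕ) :
    (a * b) ^ (n + 1) = a * (b * a) ^ n * b := by
  induction n with
  | zero => simp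
  | succ n ih =>
    rw [pow_succ, ih, pow_succ]
    simp only [mul_assoc]

/-- The key lemma: a properly nilpotent element `y` satisfies `Φ * y * Φ = 0`. -/
lemma gma_properlyNilpotent_sandwich {k I : Type*} [Field k] [Fintype I]
    [DecidableEq I] (Φ : Matrix I I k) (y : Matrix I I k)
    (hy : GmaProperlyNilpotent Φ y) : Φ * y * Φ = 0 := by
  by_contra hB
  obtain ⟨p, q, hpq⟩ : ∃ p q, (Φ * y * Φ) p q ≠ 0 := by
    by_contra h
    push_neg at h
    exact hB (by ext i j; simp [h i j])
  set a : Matrix I I k := Matrix.single q p 1 with ha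
  obtain ⟨n, hn⟩ := hy a
  rw [gmaPow_eq] at hn
  set w : Matrix I I k := gmaMul Φ a y with hw
  -- hn : w * (Φ * w) ^ n = 0
  set C : Matrix I I k := a * (Φ * y * Φ) with hC
  have hCw : C = w * Φ := by
    rw [hC, hw, gmaMul]
    simp only [mul_assoc]
  have hCpow : C ^ (n + 2) = 0 := by
    rw [hCw, gma_aux_pow, pow_succ, ← mul_assoc, ← mul_assoc, hn]
    simp
  set c : k := (Φ * y * Φ) p q with hc
  have hCentry : ∀ j, C q j = (Φ * y * Φ) p j := by
    intro j
    simp [hC, ha]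
  have hCqq : C q q = c := by rw [hCentry q, hc]
  have hCzero : ∀ i j, i ≠ q → C i j = 0 := by
    intro i j hi
    simp [hC, ha, hi]
  have hsq : C * C = c • C := by
    ext i j
    rw [Matrix.mul_apply, Matrix.smul_apply, smul_eq_mul, Finset.sum_eq_single q]
    · by_cases hi : i = q
      · rw [hi, hCqq]
      · rw [hCzero i q hi, hCzero i j hi, zero_mul, mul_zero]
    · intro b _ hb
      rw [hCzero b j hb, mul_zero]
    · simp
  have key : ∀ m : ℕ, C ^ (m + 1) = c ^ m • C := by
    intro m
    induction m with
    | zero => simp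
    | succ m ih =>
      rw [pow_succ, ih, smul_mul_assoc, hsq, smul_smul, pow_succ]
  have hkey := key (n + 1)
  rw [show n + 1 + 1 = n + 2 from rfl, hCpow] at hkey
  have h3 := congrFun (congrFun hkey.symm q) q
  rw [Matrix.smul_apply, hCqq] at h3
  simp only [Matrix.zero_apply, smul_eq_mul] at h3
  rcases mul_eq_zero.mp h3 with h | h
  · exact pow_ne_zero _ hpq h
  · exact hpq h

/-- The radical of a generalized matrix algebra satisfies `Rad(A)³ = 0`:
the product of any three elements of the radical vanishes, so its
nilpotency degree is at most 3. -/
theorem gma_radical_cube_zero {k I : Type*} [Field k] [Fintype I]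
    [DecidableEq I] (Φ : Matrix I I k) (x y z : Matrix I I k)
    (hx : GmaProperlyNilpotent Φ x) (hy : GmaProperlyNilpotent Φ y)
    (hz : GmaProperlyNilpotent Φ z) :
    gmaMul Φ (gmaMul Φ x y) z = 0 := by
  have h := gma_properlyNilpotent_sandwich Φ y hy
  show x * Φ * y * Φ * z = 0
  calc x * Φ * y * Φ * z = x * (Φ * y * Φ) * z := by simp only [mul_assoc]
    _ = 0 := by rw [h]; simp
end
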